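/- Let F be a Minkowski norm on a finite-dimensional real vector space E, and let L* : E* → E be the Legendre transform, sending each α ∈ E* to the unique v ∈ E with F(v) = F*(α) and α(v) = F*(α)². Then L* is a bijection from E* onto E with L*(0) = 0, L* is continuous on E* and C^∞ on E* \ {0}, and its inverse L := (L*)^{-1} : E → E* is given by L(0) = 0 and L(v) = g_v(v, ·) for v ≠ 0. -/

import Mathlib

/-- The fundamental tensor of `F` at `v`: `g_v(w₁, w₂) := (1/2)·D²(F²)(v)[w₁, w₂]`,
given by the second Fréchet derivative of `F²` at `v`. -/
noncomputable def fundamentalTensor {E : Type*} [NormedAddCommGroup E] [NormedSpace ℝ E]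
    (F : E → ℝ) (v w₁ w₂ : E) : ℝ :=
  (1 / 2 : ℝ) * iteratedFDeriv ℝ 2 (fun x => F x ^ 2) v ![w₁, w₂]

/-- A **Minkowski norm** on a real vector space `E`: `F ≥ 0`, positive away from `0`,
smooth on `E \ {0}`, positively `1`-homogeneous, and with positive definite
fundamental tensor `g_v` for every `v ≠ 0`. -/
structure IsMinkowskiNorm {E : Type*} [NormedAddCommGroup E] [NormedSpace ℝ E]
    (F : E → ℝ) : Prop where
  nonneg : ∀ v : E, 0 ≤ F v
  pos : ∀ v : E, v ≠ 0 → 0 < F v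
  smooth : ContDiffOn ℝ (⊤ : ℕ∞) F {(0 : E)}ᶜ
  homog : ∀ c : ℝ, 0 ≤ c → ∀ v : E, F (c • v) = c * F v
  posdef : ∀ v : E, v ≠ 0 → ∀ w : E, w ≠ 0 → 0 < fundamentalTensor F v w w

/-- The dual norm `F*(α) := sup {α(v) : F(v) ≤ 1}` on the dual space. -/
noncomputable def dualNorm {E : Type*} [NormedAddCommGroup E] [NormedSpace ℝ E]
    (F : E → ℝ) (α : E →L[ℝ] ℝ) : ℝ :=
  sSup ((fun v => α v) '' {v : E | F v ≤ 1})

open Set Filter Topology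

section MinkAux

variable {E : Type*} [NormedAddCommGroup E] [NormedSpace ℝ E]
variable {F : E → ℝ}

theorem IsMinkowskiNorm.F_zero (hF : IsMinkowskiNorm F) : F 0 = 0 := by
  have := hF.homog 0 le_rfl 0
  simpa using this

theorem IsMinkowskiNorm.eq_zero_iff (hF : IsMinkowskiNorm F) {v : E} : F v = 0 ↔ v = 0 := by
  constructor
  · intro h
    by_contra hv
    exact (hF.pos v hv).ne' h
  · rintro rfl; exact hF.F_zero

theorem IsMinkowskiNorm.contDiffAt (hF : IsMinkowskiNorm F) {v : E} (hv : v ≠ 0) :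
    ContDiffAt ℝ (⊤ : ℕ∞) F v :=
  hF.smooth.contDiffAt (isOpen_compl_singleton.mem_nhds (by simpa using hv))

theorem IsMinkowskiNorm.contDiffAt_sq (hF : IsMinkowskiNorm F) {v : E} (hv : v ≠ 0) :
    ContDiffAt ℝ (⊤ : ℕ∞) (fun x => F x ^ 2) v :=
  (hF.contDiffAt hv).pow 2

theorem IsMinkowskiNorm.sq_homog (hF : IsMinkowskiNorm F) (c : ℝ) (hc : 0 ≤ c) (v : E) :
    F (c • v) ^ 2 = c ^ 2 * F v ^ 2 := by
  rw [hF.homog c hc v]; ring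

end MinkAux

section Euler

variable {E : Type*} [NormedAddCommGroup E] [NormedSpace ℝ E]
variable {F : E → ℝ}

theorem line_hasDerivAt {G : Type*} [NormedAddCommGroup G] [NormedSpace ℝ G]
    (f : E → G) (v : E) (t : ℝ) (h : DifferentiableAt ℝ f (t • v)) :
    HasDerivAt (fun s : ℝ => f (s • v)) (fderiv ℝ f (t • v) v) t := by
  have hγ : HasDerivAt (fun s : ℝ => s • v) v t := by
    simpa using (hasDerivAt_id t).smul_const v
  simpa [Function.comp_def] using (h.hasFDerivAt).comp_hasDerivAt t hγ

/-- Euler: `Df(v)(v) = 2 f(v)` for `f = F²`. -/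
theorem IsMinkowskiNorm.euler1 (hF : IsMinkowskiNorm F) {v : E} (hv : v ≠ 0) :
    fderiv ℝ (fun x => F x ^ 2) v v = 2 * F v ^ 2 := by
  set f : E → ℝ := fun x => F x ^ 2 with hf
  have hdiff : DifferentiableAt ℝ f v := (hF.contDiffAt_sq hv).differentiableAt (by simp)
  have h1 : HasDerivAt (fun t : ℝ => f (t • v)) (fderiv ℝ f v v) 1 := by
    have := line_hasDerivAt f v 1 (by simpa using hdiff)
    simpa using this
  have h2' : HasDerivAt (fun t : ℝ => t ^ 2 * f v) (2 * f v) 1 := by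
    simpa using (hasDerivAt_pow 2 (1:ℝ)).mul_const (f v)
  have heq : (fun t : ℝ => t ^ 2 * f v) =ᶠ[𝓝 (1:ℝ)] fun t : ℝ => f (t • v) := by
    filter_upwards [Ioi_mem_nhds (show (0:ℝ) < 1 by norm_num)] with t ht
    simp only [hf]
    rw [hF.sq_homog t (le_of_lt ht) v]
  have h2 : HasDerivAt (fun t : ℝ => f (t • v)) (2 * f v) 1 := h2'.congr_of_eventuallyEq heq.symm
  exact h1.unique h2

/-- Homogeneity of the derivative: `Df(cv) = c • Df(v)` for `c > 0`. -/
theorem IsMinkowskiNorm.fderiv_homog (hF : IsMinkowskiNorm F) {v : E} (hv : v ≠ 0)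
    {c : ℝ} (hc : 0 < c) :
    fderiv ℝ (fun x => F x ^ 2) (c • v) = c • fderiv ℝ (fun x => F x ^ 2) v := by
  set f : E → ℝ := fun x => F x ^ 2 with hf
  have hcv : c • v ≠ 0 := smul_ne_zero hc.ne' hv
  have hdcv : DifferentiableAt ℝ f (c • v) := (hF.contDiffAt_sq hcv).differentiableAt (by simp)
  have hdv : DifferentiableAt ℝ f v := (hF.contDiffAt_sq hv).differentiableAt (by simp)
  set A : E →L[ℝ] E := c • ContinuousLinearMap.id ℝ E with hA
  have hAd : HasFDerivAt (fun x : E => c • x) A v := by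
    exact (hasFDerivAt_id v).const_smul c
  have hcomp : HasFDerivAt (fun x => f (c • x)) ((fderiv ℝ f (c • v)).comp A) v := by
    have := HasFDerivAt.comp (g := f) (f := fun x : E => c • x) v
      (by simpa using hdcv.hasFDerivAt) hAd
    simpa [Function.comp_def] using this
  have hconst : HasFDerivAt (fun x => c ^ 2 * f x) ((c ^ 2) • fderiv ℝ f v) v := by
    simpa using hdv.hasFDerivAt.const_mul (c ^ 2)
  have heq : (fun x => f (c • x)) = fun x => c ^ 2 * f x := by
    funext x; simp only [hf]; exact hF.sq_homog c hc.le x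
  rw [heq] at hcomp
  have huniq := hcomp.unique hconst
  ext w
  have h1 : fderiv ℝ f (c • v) (c • w) = c ^ 2 * fderiv ℝ f v w := by
    have := congrArg (fun (T : E →L[ℝ] ℝ) => T w) huniq
    simpa [hA] using this
  have : c * fderiv ℝ f (c • v) w = c ^ 2 * fderiv ℝ f v w := by
    rw [← h1, map_smul]; simp [smul_eq_mul]
  have hc' : c ≠ 0 := hc.ne'
  simp only [ContinuousLinearMap.smul_apply, smul_eq_mul]
  nlinarith [this]

/-- Euler for the derivative: `D²f(v)[v, w] = Df(v)(w)`. -/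
theorem IsMinkowskiNorm.second_euler (hF : IsMinkowskiNorm F) {v : E} (hv : v ≠ 0) :
    fderiv ℝ (fderiv ℝ (fun x => F x ^ 2)) v v = fderiv ℝ (fun x => F x ^ 2) v := by
  set f : E → ℝ := fun x => F x ^ 2 with hf
  set G : E → (E →L[ℝ] ℝ) := fderiv ℝ f with hG
  have hGsm : ContDiffOn ℝ (⊤ : ℕ∞) G {(0:E)}ᶜ := by
    have : ContDiffOn ℝ (⊤ : ℕ∞) f {(0:E)}ᶜ := fun x hx =>
      ((hF.contDiffAt_sq (by simpa using hx)).contDiffWithinAt)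
    exact this.fderiv_of_isOpen isOpen_compl_singleton (by simp)
  have hGd : DifferentiableAt ℝ G v :=
    ((hGsm.contDiffAt (isOpen_compl_singleton.mem_nhds (by simpa using hv))).differentiableAt
      (by simp))
  have h1 : HasDerivAt (fun t : ℝ => G (t • v)) (fderiv ℝ G v v) 1 := by
    have := line_hasDerivAt G v 1 (by simpa using hGd)
    simpa using this
  have h2' : HasDerivAt (fun t : ℝ => t • G v) (G v) 1 := by
    simpa using (hasDerivAt_id (1:ℝ)).smul_const (G v)
  have heq : (fun t : ℝ => t • G v) =ᶠ[𝓝 (1:ℝ)] fun t : ℝ => G (t • v) := by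
    filter_upwards [Ioi_mem_nhds (show (0:ℝ) < 1 by norm_num)] with t ht
    exact (hF.fderiv_homog hv ht).symm
  have h2 : HasDerivAt (fun t : ℝ => G (t • v)) (G v) 1 := h2'.congr_of_eventuallyEq heq.symm
  exact h1.unique h2

/-- `g_v(v, w) = (1/2)·Df(v)(w)`. -/
theorem IsMinkowskiNorm.tensor_eq (hF : IsMinkowskiNorm F) {v : E} (hv : v ≠ 0) (w : E) :
    fundamentalTensor F v v w = (1 / 2 : ℝ) * fderiv ℝ (fun x => F x ^ 2) v w := by
  rw [fundamentalTensor, iteratedFDeriv_two_apply]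
  simp only [Matrix.cons_val_zero, Matrix.cons_val_one, Matrix.head_cons]
  rw [hF.second_euler hv]

/-- `g_v(v, v) = F(v)²`. -/
theorem IsMinkowskiNorm.tensor_self (hF : IsMinkowskiNorm F) {v : E} (hv : v ≠ 0) :
    fundamentalTensor F v v v = F v ^ 2 := by
  rw [hF.tensor_eq hv, hF.euler1 hv]; ring

end Euler

section Bounds

variable {E : Type*} [NormedAddCommGroup E] [NormedSpace ℝ E] [FiniteDimensional ℝ E]
variable {F : E → ℝ}

omit [FiniteDimensional ℝ E] in
theorem IsMinkowskiNorm.scale_eq (hF : IsMinkowskiNorm F) {x : E} (hx : x ≠ 0) :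
    F x = ‖x‖ * F (‖x‖⁻¹ • x) := by
  have hn : ‖x‖ ≠ 0 := norm_ne_zero_iff.mpr hx
  have : (‖x‖ : ℝ) • (‖x‖⁻¹ • x) = x := by
    rw [smul_smul, mul_inv_cancel₀ hn, one_smul]
  conv_lhs => rw [← this]
  rw [hF.homog _ (norm_nonneg x)]

theorem IsMinkowskiNorm.exists_upper (hF : IsMinkowskiNorm F) [Nontrivial E] :
    ∃ M : ℝ, 0 < M ∧ ∀ x : E, F x ≤ M * ‖x‖ := by
  have hsph : IsCompact (Metric.sphere (0:E) 1) := isCompact_sphere 0 1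
  have hne : (Metric.sphere (0:E) 1).Nonempty := NormedSpace.sphere_nonempty.mpr zero_le_one
  have hsub : Metric.sphere (0:E) 1 ⊆ {(0:E)}ᶜ := fun x hx => by
    simp only [mem_compl_iff, mem_singleton_iff]
    intro h; subst h; simp at hx
  have hcont : ContinuousOn F (Metric.sphere (0:E) 1) :=
    (hF.smooth.continuousOn).mono hsub
  obtain ⟨z, hz, hzmax⟩ := hsph.exists_isMaxOn hne hcont
  refine ⟨max (F z) 1, lt_of_lt_of_le one_pos (le_max_right _ _), fun x => ?_⟩
  rcases eq_or_ne x 0 with rfl | hx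
  · simp [hF.F_zero]
  · have hn : (0:ℝ) < ‖x‖ := norm_pos_iff.mpr hx
    rw [hF.scale_eq hx]
    have hmem : ‖x‖⁻¹ • x ∈ Metric.sphere (0:E) 1 := by
      simp [norm_smul, abs_of_pos (inv_pos.mpr hn), inv_mul_cancel₀ hn.ne']
    have hle : F (‖x‖⁻¹ • x) ≤ F z := hzmax hmem
    calc ‖x‖ * F (‖x‖⁻¹ • x) ≤ ‖x‖ * F z := by nlinarith [hle, hn.le]
      _ ≤ max (F z) 1 * ‖x‖ := by
          rw [mul_comm]; exact mul_le_mul_of_nonneg_right (le_max_left _ _) hn.le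

theorem IsMinkowskiNorm.exists_lower (hF : IsMinkowskiNorm F) [Nontrivial E] :
    ∃ m : ℝ, 0 < m ∧ ∀ x : E, m * ‖x‖ ≤ F x := by
  have hsph : IsCompact (Metric.sphere (0:E) 1) := isCompact_sphere 0 1
  have hne : (Metric.sphere (0:E) 1).Nonempty := NormedSpace.sphere_nonempty.mpr zero_le_one
  have hsub : Metric.sphere (0:E) 1 ⊆ {(0:E)}ᶜ := fun x hx => by
    simp only [mem_compl_iff, mem_singleton_iff]
    intro h; subst h; simp at hx
  have hcont : ContinuousOn F (Metric.sphere (0:E) 1) :=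
    (hF.smooth.continuousOn).mono hsub
  obtain ⟨z, hz, hzmin⟩ := hsph.exists_isMinOn hne hcont
  have hzne : z ≠ 0 := fun h => by subst h; simp at hz
  refine ⟨F z, hF.pos z hzne, fun x => ?_⟩
  rcases eq_or_ne x 0 with rfl | hx
  · simp [hF.F_zero]
  · have hn : (0:ℝ) < ‖x‖ := norm_pos_iff.mpr hx
    rw [hF.scale_eq hx]
    have hmem : ‖x‖⁻¹ • x ∈ Metric.sphere (0:E) 1 := by
      simp [norm_smul, abs_of_pos (inv_pos.mpr hn), inv_mul_cancel₀ hn.ne']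
    have hle : F z ≤ F (‖x‖⁻¹ • x) := hzmin hmem
    nlinarith [hle, hn.le]

theorem IsMinkowskiNorm.continuous (hF : IsMinkowskiNorm F) [Nontrivial E] : Continuous F := by
  obtain ⟨M, hM, hMb⟩ := hF.exists_upper
  rw [continuous_iff_continuousAt]
  intro x
  rcases eq_or_ne x 0 with rfl | hx
  · rw [ContinuousAt, hF.F_zero]
    have h0 : Tendsto (fun x : E => M * ‖x‖) (𝓝 0) (𝓝 0) := by
      have := (continuous_norm (E := E)).tendsto 0
      simpa using (this.const_mul M)
    exact squeeze_zero (fun y => hF.nonneg y) (fun y => hMb y) h0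
  · exact (hF.contDiffAt hx).continuousAt

end Bounds

section GradBounds

variable {E : Type*} [NormedAddCommGroup E] [NormedSpace ℝ E] [FiniteDimensional ℝ E]
variable {F : E → ℝ}

omit [FiniteDimensional ℝ E] in
theorem IsMinkowskiNorm.contDiffOn_fderiv (hF : IsMinkowskiNorm F) :
    ContDiffOn ℝ (⊤ : ℕ∞) (fderiv ℝ (fun x => F x ^ 2)) {(0:E)}ᶜ := by
  have : ContDiffOn ℝ (⊤ : ℕ∞) (fun x => F x ^ 2) {(0:E)}ᶜ := fun x hx =>
    ((hF.contDiffAt_sq (by simpa using hx)).contDiffWithinAt)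
  exact this.fderiv_of_isOpen isOpen_compl_singleton (by simp)

theorem IsMinkowskiNorm.exists_fderiv_bound (hF : IsMinkowskiNorm F) [Nontrivial E] :
    ∃ K : ℝ, 0 < K ∧ ∀ x : E, x ≠ 0 → ‖fderiv ℝ (fun y => F y ^ 2) x‖ ≤ K * ‖x‖ := by
  set G := fderiv ℝ (fun y => F y ^ 2) with hG
  have hsph : IsCompact (Metric.sphere (0:E) 1) := isCompact_sphere 0 1
  have hne : (Metric.sphere (0:E) 1).Nonempty := NormedSpace.sphere_nonempty.mpr zero_le_one
  have hsub : Metric.sphere (0:E) 1 ⊆ {(0:E)}ᶜ := fun x hx => by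
    simp only [mem_compl_iff, mem_singleton_iff]
    intro h; subst h; simp at hx
  have hcont : ContinuousOn (fun x => ‖G x‖) (Metric.sphere (0:E) 1) :=
    (hF.contDiffOn_fderiv.continuousOn.mono hsub).norm
  obtain ⟨z, hz, hzmax⟩ := hsph.exists_isMaxOn hne hcont
  refine ⟨max ‖G z‖ 1, lt_of_lt_of_le one_pos (le_max_right _ _), fun x hx => ?_⟩
  have hn : (0:ℝ) < ‖x‖ := norm_pos_iff.mpr hx
  have hu : ‖x‖⁻¹ • x ≠ 0 := smul_ne_zero (inv_ne_zero hn.ne') hx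
  have hmem : ‖x‖⁻¹ • x ∈ Metric.sphere (0:E) 1 := by
    simp [norm_smul, abs_of_pos (inv_pos.mpr hn), inv_mul_cancel₀ hn.ne']
  have hhom : G x = ‖x‖ • G (‖x‖⁻¹ • x) := by
    have : (‖x‖ : ℝ) • (‖x‖⁻¹ • x) = x := by
      rw [smul_smul, mul_inv_cancel₀ hn.ne', one_smul]
    conv_lhs => rw [← this]
    exact hF.fderiv_homog hu hn
  have hle : ‖G (‖x‖⁻¹ • x)‖ ≤ ‖G z‖ := hzmax hmem
  calc ‖G x‖ = ‖x‖ * ‖G (‖x‖⁻¹ • x)‖ := by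
        rw [hhom, norm_smul, Real.norm_eq_abs, abs_of_pos hn]
    _ ≤ ‖x‖ * ‖G z‖ := by nlinarith [hle, hn.le]
    _ ≤ max ‖G z‖ 1 * ‖x‖ := by
        rw [mul_comm]; exact mul_le_mul_of_nonneg_right (le_max_left _ _) hn.le

theorem IsMinkowskiNorm.hasFDerivAt_zero (hF : IsMinkowskiNorm F) [Nontrivial E] :
    HasFDerivAt (fun x => F x ^ 2) (0 : E →L[ℝ] ℝ) 0 := by
  obtain ⟨M, hM, hMb⟩ := hF.exists_upper
  rw [hasFDerivAt_iff_isLittleO_nhds_zero]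
  have h1 : (fun h : E => F h ^ 2) =O[𝓝 0] fun h => ‖h‖ * ‖h‖ := by
    apply Asymptotics.IsBigO.of_bound (M ^ 2)
    filter_upwards with h
    have h1 := hMb h
    have h2 := hF.nonneg h
    have : F h ^ 2 ≤ M ^ 2 * (‖h‖ * ‖h‖) := by nlinarith
    simpa [abs_of_nonneg (mul_nonneg (norm_nonneg h) (norm_nonneg h)),
      abs_of_nonneg (sq_nonneg (F h))] using this
  have h2 : (fun h : E => ‖h‖ * ‖h‖) =o[𝓝 0] fun h : E => h := by
    rw [Asymptotics.isLittleO_iff]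
    intro c hc
    filter_upwards [Metric.ball_mem_nhds (0:E) hc] with h hh
    simp only [Metric.mem_ball, dist_zero_right] at hh
    have : ‖h‖ * ‖h‖ ≤ c * ‖h‖ := by nlinarith [norm_nonneg h]
    simpa [abs_of_nonneg (mul_nonneg (norm_nonneg h) (norm_nonneg h))] using this
  have := h1.trans_isLittleO h2
  simpa [hF.F_zero] using this

theorem IsMinkowskiNorm.fderiv_zero (hF : IsMinkowskiNorm F) [Nontrivial E] :
    fderiv ℝ (fun x => F x ^ 2) 0 = 0 :=
  hF.hasFDerivAt_zero.fderiv

theorem IsMinkowskiNorm.continuous_fderiv (hF : IsMinkowskiNorm F) [Nontrivial E] :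
    Continuous (fderiv ℝ (fun x => F x ^ 2)) := by
  set G := fderiv ℝ (fun y => F y ^ 2) with hG
  obtain ⟨K, hK, hKb⟩ := hF.exists_fderiv_bound
  rw [continuous_iff_continuousAt]
  intro x
  rcases eq_or_ne x 0 with rfl | hx
  · rw [ContinuousAt]
    have hG0 : G 0 = 0 := hF.fderiv_zero
    rw [hG0]
    apply squeeze_zero_norm (a := fun y : E => K * ‖y‖)
    · intro y
      rcases eq_or_ne y 0 with rfl | hy
      · simp [hG0]
      · exact hKb y hy
    · have := (continuous_norm (E := E)).tendsto 0
      simpa using this.const_mul K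
  · exact (hF.contDiffOn_fderiv.continuousOn.continuousAt
      (isOpen_compl_singleton.mem_nhds (by simpa using hx)))

end GradBounds

section ConvexCore

variable {E : Type*} [NormedAddCommGroup E] [NormedSpace ℝ E] [FiniteDimensional ℝ E]
variable {F : E → ℝ}

omit [FiniteDimensional ℝ E] in
theorem second_deriv_eq_tensor (F : E → ℝ) (z d : E) :
    fderiv ℝ (fderiv ℝ (fun x => F x ^ 2)) z d d = 2 * fundamentalTensor F z d d := by
  rw [fundamentalTensor, iteratedFDeriv_two_apply]
  simp only [Matrix.cons_val_zero, Matrix.cons_val_one, Matrix.head_cons]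
  ring

theorem IsMinkowskiNorm.line_deriv (hF : IsMinkowskiNorm F) [Nontrivial E] (x d : E) (t : ℝ) :
    HasDerivAt (fun s : ℝ => F (x + s • d) ^ 2)
      (fderiv ℝ (fun y => F y ^ 2) (x + t • d) d) t := by
  have hp : HasDerivAt (fun s : ℝ => x + s • d) d t := by
    simpa using ((hasDerivAt_id t).smul_const d).const_add x
  rcases eq_or_ne (x + t • d) 0 with h0 | h0
  · have hfd : HasFDerivAt (fun y => F y ^ 2) (0 : E →L[ℝ] ℝ) (x + t • d) := by
      rw [h0]; exact hF.hasFDerivAt_zero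
    have := hfd.comp_hasDerivAt t hp
    rw [h0, hF.fderiv_zero]
    simpa [Function.comp_def] using this
  · have hfd : HasFDerivAt (fun y => F y ^ 2)
        (fderiv ℝ (fun y => F y ^ 2) (x + t • d)) (x + t • d) :=
      ((hF.contDiffAt_sq h0).differentiableAt (by simp)).hasFDerivAt
    simpa [Function.comp_def] using hfd.comp_hasDerivAt t hp

theorem IsMinkowskiNorm.line_deriv2 (hF : IsMinkowskiNorm F) (x d : E) {t : ℝ}
    (h0 : x + t • d ≠ 0) :
    HasDerivAt (fun s : ℝ => fderiv ℝ (fun y => F y ^ 2) (x + s • d) d)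
      (2 * fundamentalTensor F (x + t • d) d d) t := by
  set G := fderiv ℝ (fun y => F y ^ 2) with hGdef
  have hp : HasDerivAt (fun s : ℝ => x + s • d) d t := by
    simpa using ((hasDerivAt_id t).smul_const d).const_add x
  have hGd : DifferentiableAt ℝ G (x + t • d) :=
    (hF.contDiffOn_fderiv.contDiffAt
      (isOpen_compl_singleton.mem_nhds (by simpa using h0))).differentiableAt (by simp)
  have hc : HasDerivAt (fun s : ℝ => G (x + s • d)) (fderiv ℝ G (x + t • d) d) t := by
    simpa [Function.comp_def] using hGd.hasFDerivAt.comp_hasDerivAt t hp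
  have := hc.clm_apply (hasDerivAt_const t d)
  simp only [map_zero, add_zero] at this
  rw [← second_deriv_eq_tensor F (x + t • d) d]
  exact this

omit [FiniteDimensional ℝ E] in
theorem IsMinkowskiNorm.line_root_unique (hF : IsMinkowskiNorm F) {x d : E} (hd : d ≠ 0)
    {s t : ℝ} (hs : x + s • d = 0) (ht : x + t • d = 0) : s = t := by
  have : (s - t) • d = 0 := by
    have h := hs.trans ht.symm
    rw [sub_smul]
    have h2 : s • d = t • d := by
      have := congrArg (fun z => z - x) h
      simpa using this
    rw [h2, sub_self]
  rcases smul_eq_zero.mp this with h | h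
  · linarith [sub_eq_zero.mp h]
  · exact absurd h hd

theorem IsMinkowskiNorm.strictMono_aux (hF : IsMinkowskiNorm F) [Nontrivial E]
    {x d : E} (hd : d ≠ 0) {a b : ℝ}
    (hroot : ∀ t ∈ Ioo a b, x + t • d ≠ 0) :
    StrictMonoOn (fun s : ℝ => fderiv ℝ (fun y => F y ^ 2) (x + s • d) d) (Icc a b) := by
  set q' := fun s : ℝ => fderiv ℝ (fun y => F y ^ 2) (x + s • d) d with hq'
  have hcont : Continuous q' := by
    have h1 : Continuous fun s : ℝ => x + s • d := by continuity
    exact (hF.continuous_fderiv.comp h1).clm_apply continuous_const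
  apply strictMonoOn_of_deriv_pos (convex_Icc a b) hcont.continuousOn
  intro t ht
  rw [interior_Icc] at ht
  have h0 := hroot t ht
  rw [(hF.line_deriv2 x d h0).deriv]
  have := hF.posdef _ h0 d hd
  linarith

end ConvexCore

section GradIneq

variable {E : Type*} [NormedAddCommGroup E] [NormedSpace ℝ E] [FiniteDimensional ℝ E]
variable {F : E → ℝ}

/-- Gradient inequality: `f(y) ≥ f(x) + Df(x)(y - x)` for `x ≠ 0`. -/
theorem IsMinkowskiNorm.grad_ineq (hF : IsMinkowskiNorm F) [Nontrivial E]
    {x : E} (hx : x ≠ 0) (y : E) :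
    F x ^ 2 + fderiv ℝ (fun z => F z ^ 2) x (y - x) ≤ F y ^ 2 := by
  rcases eq_or_ne y x with rfl | hxy
  · simp
  set d := y - x with hd
  have hdne : d ≠ 0 := sub_ne_zero.mpr hxy
  set q : ℝ → ℝ := fun s => F (x + s • d) ^ 2 with hq
  set q' : ℝ → ℝ := fun s => fderiv ℝ (fun z => F z ^ 2) (x + s • d) d with hq'
  have hderiv : ∀ t : ℝ, HasDerivAt q (q' t) t := fun t => hF.line_deriv x d t
  -- monotonicity of q' on Icc 0 1
  have hmono : MonotoneOn q' (Icc (0:ℝ) 1) := by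
    by_cases hroot : ∃ t₀ ∈ Icc (0:ℝ) 1, x + t₀ • d = 0
    · obtain ⟨t₀, ht₀mem, ht₀⟩ := hroot
      have hs1 : StrictMonoOn q' (Icc (0:ℝ) t₀) := by
        apply hF.strictMono_aux hdne
        intro t ht h0
        exact absurd (hF.line_root_unique hdne h0 ht₀) (ne_of_lt ht.2)
      have hs2 : StrictMonoOn q' (Icc t₀ 1) := by
        apply hF.strictMono_aux hdne
        intro t ht h0
        exact absurd (hF.line_root_unique hdne h0 ht₀) (ne_of_gt ht.1)
      intro s hs t ht hst
      rcases le_total s t₀ with h1 | h1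
      · rcases le_total t t₀ with h2 | h2
        · exact (hs1.monotoneOn ⟨hs.1, h1⟩ ⟨ht.1, h2⟩ hst)
        · calc q' s ≤ q' t₀ := hs1.monotoneOn ⟨hs.1, h1⟩ ⟨ht₀mem.1, le_refl _⟩ h1
            _ ≤ q' t := hs2.monotoneOn ⟨le_refl _, ht₀mem.2⟩ ⟨h2, ht.2⟩ h2
      · exact hs2.monotoneOn ⟨h1, hs.2⟩ ⟨h1.trans hst, ht.2⟩ hst
    · push_neg at hroot
      exact (hF.strictMono_aux hdne fun t ht => hroot t (Ioo_subset_Icc_self ht)).monotoneOn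
  -- MVT
  have hcont : ContinuousOn q (Icc (0:ℝ) 1) := fun t _ => (hderiv t).continuousAt.continuousWithinAt
  obtain ⟨c, hc, hceq⟩ := exists_hasDerivAt_eq_slope q q' one_pos hcont
    (fun t _ => hderiv t)
  have h0le : q' 0 ≤ q' c := hmono ⟨le_refl _, zero_le_one⟩ ⟨hc.1.le, hc.2.le⟩ hc.1.le
  have hq0 : q 0 = F x ^ 2 := by simp [hq]
  have hq1 : q 1 = F y ^ 2 := by simp [hq, hd]
  have hq'0 : q' 0 = fderiv ℝ (fun z => F z ^ 2) x (y - x) := by simp [hq', hd]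
  rw [hq0, hq1] at hceq
  rw [← hq'0]
  have : q' c = F y ^ 2 - F x ^ 2 := by rw [hceq]; ring
  linarith [h0le, this.symm.le]

/-- Equality case: if the segment avoids `0` and equality holds, then `y = x`. -/
theorem IsMinkowskiNorm.grad_eq_case (hF : IsMinkowskiNorm F) [Nontrivial E]
    {x y : E} (hx : x ≠ 0)
    (hseg : ∀ t ∈ Icc (0:ℝ) 1, x + t • (y - x) ≠ 0)
    (heq : F y ^ 2 = F x ^ 2 + fderiv ℝ (fun z => F z ^ 2) x (y - x)) : y = x := by
  by_contra hxy
  set d := y - x with hd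
  have hdne : d ≠ 0 := sub_ne_zero.mpr hxy
  set q : ℝ → ℝ := fun s => F (x + s • d) ^ 2 with hq
  set q' : ℝ → ℝ := fun s => fderiv ℝ (fun z => F z ^ 2) (x + s • d) d with hq'
  have hderiv : ∀ t : ℝ, HasDerivAt q (q' t) t := fun t => hF.line_deriv x d t
  have hsm : StrictMonoOn q' (Icc (0:ℝ) 1) :=
    hF.strictMono_aux hdne fun t ht => hseg t (Ioo_subset_Icc_self ht)
  have hcont : ContinuousOn q (Icc (0:ℝ) 1) := fun t _ => (hderiv t).continuousAt.continuousWithinAt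
  obtain ⟨c, hc, hceq⟩ := exists_hasDerivAt_eq_slope q q' one_pos hcont
    (fun t _ => hderiv t)
  have hq0 : q 0 = F x ^ 2 := by simp [hq]
  have hq1 : q 1 = F y ^ 2 := by simp [hq, hd]
  have hq'0 : q' 0 = fderiv ℝ (fun z => F z ^ 2) x (y - x) := by simp [hq', hd]
  rw [hq0, hq1] at hceq
  have hlt : q' 0 < q' c := hsm ⟨le_refl _, zero_le_one⟩ ⟨hc.1.le, hc.2.le⟩ hc.1
  rw [hq'0] at hlt
  have : q' c = F y ^ 2 - F x ^ 2 := by rw [hceq]; ring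
  rw [this] at hlt
  linarith [heq]

end GradIneq

section FundIneq

variable {E : Type*} [NormedAddCommGroup E] [NormedSpace ℝ E] [FiniteDimensional ℝ E]
variable {F : E → ℝ}

theorem IsMinkowskiNorm.fund_ineq (hF : IsMinkowskiNorm F) [Nontrivial E]
    {v : E} (hv : v ≠ 0) (w : E) :
    fderiv ℝ (fun z => F z ^ 2) v w ≤ 2 * F v * F w := by
  set L := fderiv ℝ (fun z => F z ^ 2) v w with hL
  set c := F v with hc
  have hcpos : 0 < c := hF.pos v hv
  rcases eq_or_ne w 0 with rfl | hw
  · have : L = 0 := by rw [hL, map_zero]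
    rw [this, hF.F_zero]
    positivity
  · have hFw : 0 < F w := hF.pos w hw
    set s : ℝ := c / F w with hs
    have hspos : 0 < s := div_pos hcpos hFw
    have h1 := hF.grad_ineq hv (s • w)
    have h2 : F (s • w) ^ 2 = s ^ 2 * F w ^ 2 := hF.sq_homog s hspos.le w
    have h3 : fderiv ℝ (fun z => F z ^ 2) v (s • w - v)
        = s * L - 2 * c ^ 2 := by
      rw [map_sub, map_smul, smul_eq_mul, hF.euler1 hv]
    rw [h2, h3] at h1
    have hkey : s * L ≤ s ^ 2 * F w ^ 2 + c ^ 2 := by nlinarith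
    have hsq : s * F w = c := by rw [hs, div_mul_cancel₀ _ hFw.ne']
    nlinarith [hkey, hspos, hFw]

theorem IsMinkowskiNorm.fund_eq_case (hF : IsMinkowskiNorm F) [Nontrivial E]
    {v u : E} (hv : v ≠ 0) (hu : u ≠ 0) (hFu : F u = F v)
    (hα : fderiv ℝ (fun z => F z ^ 2) v u = 2 * F v ^ 2) : u = v := by
  have hcpos : 0 < F v := hF.pos v hv
  have heq : F u ^ 2 = F v ^ 2 + fderiv ℝ (fun z => F z ^ 2) v (u - v) := by
    rw [map_sub, hα, hF.euler1 hv, hFu]; ring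
  have hseg : ∀ t ∈ Icc (0:ℝ) 1, v + t • (u - v) ≠ 0 := by
    intro t ht habs
    have ht0 : t ≠ 0 := by
      intro h; subst h; simp at habs; exact hv habs
    have hcoef : u = ((t - 1) / t) • v := by
      have h1 : t • u = (t - 1) • v := by
        have := habs
        rw [smul_sub] at this
        have h2 : v + t • u - t • v = 0 := by
          rw [← this]; abel
        have h3 : t • u = t • v - v := by
          have := h2
          linear_combination (norm := module) this
        rw [h3, sub_smul, one_smul]
      have := congrArg (fun z => t⁻¹ • z) h1
      simpa [smul_smul, inv_mul_cancel₀ ht0, div_eq_inv_mul, mul_comm] using this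
    have hneg : (t - 1) / t < 0 := by
      rcases eq_or_ne t 1 with rfl | ht1
      · exfalso
        apply hu
        rw [hcoef]; simp
      · apply div_neg_of_neg_of_pos
        · have := ht.2; cases lt_or_eq_of_le this with
          | inl h => linarith
          | inr h => exact absurd h ht1
        · cases lt_or_eq_of_le ht.1 with
          | inl h => exact h
          | inr h => exact absurd h.symm ht0
    have : fderiv ℝ (fun z => F z ^ 2) v u = ((t - 1) / t) * (2 * F v ^ 2) := by
      rw [hcoef, map_smul, smul_eq_mul, hF.euler1 hv]
    rw [hα] at this
    nlinarith [this, hneg, sq_nonneg (F v), hcpos]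
  exact hF.grad_eq_case hv hseg heq

end FundIneq

section DualNorm

variable {E : Type*} [NormedAddCommGroup E] [NormedSpace ℝ E] [FiniteDimensional ℝ E]
variable {F : E → ℝ}

theorem IsMinkowskiNorm.unitBall_compact (hF : IsMinkowskiNorm F) [Nontrivial E] :
    IsCompact {v : E | F v ≤ 1} := by
  obtain ⟨m, hm, hmb⟩ := hF.exists_lower
  apply Metric.isCompact_of_isClosed_isBounded
  · exact isClosed_le hF.continuous continuous_const
  · rw [Metric.isBounded_iff_subset_closedBall 0]
    refine ⟨m⁻¹, fun v hv => ?_⟩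
    simp only [Metric.mem_closedBall, dist_zero_right]
    have h1 := hmb v
    have h2 : F v ≤ 1 := hv
    have h3 : m * ‖v‖ ≤ 1 := h1.trans h2
    calc ‖v‖ = m⁻¹ * (m * ‖v‖) := by field_simp
      _ ≤ m⁻¹ * 1 := by
          apply mul_le_mul_of_nonneg_left h3 (inv_pos.mpr hm).le
      _ = m⁻¹ := mul_one _

theorem IsMinkowskiNorm.mem_unitBall_zero (hF : IsMinkowskiNorm F) :
    (0:E) ∈ {v : E | F v ≤ 1} := by
  simp [Set.mem_setOf_eq, hF.F_zero]

theorem IsMinkowskiNorm.dual_bddAbove (hF : IsMinkowskiNorm F) [Nontrivial E]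
    (α : E →L[ℝ] ℝ) : BddAbove ((fun v => α v) '' {v : E | F v ≤ 1}) :=
  (hF.unitBall_compact.image α.continuous).bddAbove

theorem IsMinkowskiNorm.le_dualNorm (hF : IsMinkowskiNorm F) [Nontrivial E]
    (α : E →L[ℝ] ℝ) {v : E} (hv : F v ≤ 1) : α v ≤ dualNorm F α :=
  le_csSup (hF.dual_bddAbove α) ⟨v, hv, rfl⟩

theorem IsMinkowskiNorm.dualNorm_nonneg (hF : IsMinkowskiNorm F) [Nontrivial E]
    (α : E →L[ℝ] ℝ) : 0 ≤ dualNorm F α := by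
  have := hF.le_dualNorm α (v := 0) (by simpa using hF.mem_unitBall_zero)
  simpa using this

theorem IsMinkowskiNorm.apply_le_dualNorm_mul (hF : IsMinkowskiNorm F) [Nontrivial E]
    (α : E →L[ℝ] ℝ) (w : E) : α w ≤ dualNorm F α * F w := by
  rcases eq_or_ne w 0 with rfl | hw
  · simp [hF.F_zero]
  · have hFw : 0 < F w := hF.pos w hw
    have hu : F ((F w)⁻¹ • w) ≤ 1 := by
      rw [hF.homog _ (inv_nonneg.mpr hFw.le), inv_mul_cancel₀ hFw.ne']
    have := hF.le_dualNorm α hu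
    rw [map_smul, smul_eq_mul] at this
    have h2 : F w * ((F w)⁻¹ * α w) ≤ F w * dualNorm F α :=
      mul_le_mul_of_nonneg_left this hFw.le
    rw [← mul_assoc, mul_inv_cancel₀ hFw.ne', one_mul] at h2
    linarith [h2]

theorem IsMinkowskiNorm.dualNorm_pos (hF : IsMinkowskiNorm F) [Nontrivial E]
    {α : E →L[ℝ] ℝ} (hα : α ≠ 0) : 0 < dualNorm F α := by
  obtain ⟨w, hw⟩ : ∃ w : E, α w ≠ 0 := by
    by_contra h
    push_neg at h
    exact hα (ContinuousLinearMap.ext fun w => by simp [h w])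
  have hw0 : w ≠ 0 := fun h => hw (by simp [h])
  set w' : E := if 0 < α w then w else -w with hw'
  have hpos : 0 < α w' := by
    rw [hw']
    split_ifs with h
    · exact h
    · push_neg at h
      rw [map_neg]
      rcases lt_or_eq_of_le h with h1 | h1
      · linarith
      · exact absurd h1 hw
  have hw'0 : w' ≠ 0 := by
    rw [hw']; split_ifs
    · exact hw0
    · simpa using hw0
  have hFw : 0 < F w' := hF.pos w' hw'0
  have hu : F ((F w')⁻¹ • w') ≤ 1 := by
    rw [hF.homog _ (inv_nonneg.mpr hFw.le), inv_mul_cancel₀ hFw.ne']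
  have hle := hF.le_dualNorm α hu
  rw [map_smul, smul_eq_mul] at hle
  have : 0 < (F w')⁻¹ * α w' := mul_pos (inv_pos.mpr hFw) hpos
  linarith

theorem IsMinkowskiNorm.dualNorm_zero (hF : IsMinkowskiNorm F) [Nontrivial E] :
    dualNorm F (0 : E →L[ℝ] ℝ) = 0 := by
  apply le_antisymm
  · apply csSup_le (Set.Nonempty.image _ ⟨0, hF.mem_unitBall_zero⟩)
    rintro x ⟨v, _, rfl⟩
    simp
  · exact hF.dualNorm_nonneg 0

theorem IsMinkowskiNorm.dualNorm_le (hF : IsMinkowskiNorm F) [Nontrivial E]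
    (α : E →L[ℝ] ℝ) {C : ℝ} (hC : ∀ v : E, F v ≤ 1 → α v ≤ C) : dualNorm F α ≤ C := by
  apply csSup_le (Set.Nonempty.image _ ⟨0, hF.mem_unitBall_zero⟩)
  rintro x ⟨v, hv, rfl⟩
  exact hC v hv

theorem IsMinkowskiNorm.dualNorm_le_opNorm_aux (hF : IsMinkowskiNorm F) [Nontrivial E] :
    ∃ C : ℝ, 0 < C ∧ ∀ α : E →L[ℝ] ℝ, dualNorm F α ≤ C * ‖α‖ := by
  obtain ⟨m, hm, hmb⟩ := hF.exists_lower
  refine ⟨m⁻¹, inv_pos.mpr hm, fun α => ?_⟩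
  apply hF.dualNorm_le
  intro v hv
  have h1 : ‖v‖ ≤ m⁻¹ := by
    have := hmb v
    calc ‖v‖ = m⁻¹ * (m * ‖v‖) := by field_simp
      _ ≤ m⁻¹ * 1 := by
          apply mul_le_mul_of_nonneg_left (this.trans hv) (inv_pos.mpr hm).le
      _ = m⁻¹ := mul_one _
  calc α v ≤ ‖α v‖ := le_abs_self _
    _ ≤ ‖α‖ * ‖v‖ := α.le_opNorm v
    _ ≤ ‖α‖ * m⁻¹ := by nlinarith [norm_nonneg α, h1]
    _ = m⁻¹ * ‖α‖ := by ring

end DualNorm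

section Characterization

variable {E : Type*} [NormedAddCommGroup E] [NormedSpace ℝ E] [FiniteDimensional ℝ E]
variable {F : E → ℝ}

theorem IsMinkowskiNorm.fderiv_sq_eq (hF : IsMinkowskiNorm F) {v : E} (hv : v ≠ 0) :
    fderiv ℝ (fun x => F x ^ 2) v = (2 * F v) • fderiv ℝ F v := by
  have hFd : DifferentiableAt ℝ F v := (hF.contDiffAt hv).differentiableAt (by simp)
  have h1 : HasFDerivAt (fun x => F x * F x)
      (F v • fderiv ℝ F v + F v • fderiv ℝ F v) v :=
    hFd.hasFDerivAt.mul hFd.hasFDerivAt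
  have h2 : (fun x => F x ^ 2) = fun x => F x * F x := by funext x; ring
  rw [h2]
  rw [h1.fderiv]
  rw [two_mul, add_smul]

theorem IsMinkowskiNorm.leg_forward (hF : IsMinkowskiNorm F) [Nontrivial E]
    {Leg : (E →L[ℝ] ℝ) → E}
    (hLeg : ∀ α : E →L[ℝ] ℝ, F (Leg α) = dualNorm F α ∧ α (Leg α) = (dualNorm F α) ^ 2)
    {α : E →L[ℝ] ℝ} {v : E} (hv : v ≠ 0) (h : Leg α = v) (w : E) :
    α w = fundamentalTensor F v v w := by
  obtain ⟨h1, h2⟩ := hLeg α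
  rw [h] at h1 h2
  set c := F v with hc
  have hcpos : 0 < c := hF.pos v hv
  have hαv : α v = c ^ 2 := by rw [h2, ← h1]
  have hbound : ∀ u : E, α u ≤ c * F u := by
    intro u
    have := hF.apply_le_dualNorm_mul α u
    rw [← h1] at this; exact this
  have hFd : DifferentiableAt ℝ F v := (hF.contDiffAt hv).differentiableAt (by simp)
  have hmin : IsLocalMin (fun u => c * F u - α u) v := by
    apply Filter.Eventually.of_forall
    intro u
    have := hbound u
    simp only [hαv]
    nlinarith [hbound u]
  have hder : HasFDerivAt (fun u => c * F u - α u) (c • fderiv ℝ F v - α) v :=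
    (hFd.hasFDerivAt.const_mul c).sub α.hasFDerivAt
  have hzero : c • fderiv ℝ F v - α = 0 := by
    have := hmin.fderiv_eq_zero
    rw [hder.fderiv] at this
    exact this
  have hα : α = c • fderiv ℝ F v := by
    have := sub_eq_zero.mp hzero
    exact this.symm
  rw [hF.tensor_eq hv, hF.fderiv_sq_eq hv, hα]
  simp only [ContinuousLinearMap.smul_apply, smul_eq_mul]
  ring

theorem IsMinkowskiNorm.leg_backward (hF : IsMinkowskiNorm F) [Nontrivial E]
    {Leg : (E →L[ℝ] ℝ) → E}
    (hLeg : ∀ α : E →L[ℝ] ℝ, F (Leg α) = dualNorm F α ∧ α (Leg α) = (dualNorm F α) ^ 2)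
    {α : E →L[ℝ] ℝ} {v : E} (hv : v ≠ 0)
    (h : ∀ w : E, α w = fundamentalTensor F v v w) : Leg α = v := by
  set c := F v with hc
  have hcpos : 0 < c := hF.pos v hv
  have hform : ∀ w, α w = (1/2 : ℝ) * fderiv ℝ (fun x => F x ^ 2) v w := by
    intro w; rw [h w, hF.tensor_eq hv]
  have hαv : α v = c ^ 2 := by
    rw [h v, hF.tensor_self hv]
  have hb : ∀ w, α w ≤ c * F w := by
    intro w
    rw [hform w]
    have := hF.fund_ineq hv w
    linarith
  have hdual : dualNorm F α = c := by
    apply le_antisymm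
    · apply hF.dualNorm_le
      intro w hw
      calc α w ≤ c * F w := hb w
        _ ≤ c * 1 := by nlinarith [hF.nonneg w]
        _ = c := mul_one c
    · have hu : F (c⁻¹ • v) ≤ 1 := by
        rw [hF.homog _ (inv_pos.mpr hcpos).le, ← hc, inv_mul_cancel₀ hcpos.ne']
      have := hF.le_dualNorm α hu
      rw [map_smul, smul_eq_mul, hαv] at this
      calc c = c⁻¹ * c ^ 2 := by field_simp
        _ ≤ dualNorm F α := this
  obtain ⟨h1, h2⟩ := hLeg α
  rw [hdual] at h1 h2
  set u := Leg α with hu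
  have hune : u ≠ 0 := by
    intro h0
    rw [h0, hF.F_zero] at h1
    exact hcpos.ne h1
  have hαu : fderiv ℝ (fun x => F x ^ 2) v u = 2 * c ^ 2 := by
    have := hform u
    rw [h2] at this
    linarith
  exact hF.fund_eq_case hv hune h1 (by rw [hαu])

end Characterization

/-- The Legendre transform `L* : E* → E`, sending each `α` to the unique `v` with
`F(v) = F*(α)` and `α(v) = F*(α)²`, is a bijection with `L*(0) = 0`, is continuous on
`E*` and `C^∞` on `E* \ {0}`, and its inverse `L = (L*)⁻¹` is given by `L(0) = 0` and
`L(v) = g_v(v, ·)` for `v ≠ 0`. -/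
theorem legendre_transform_properties
    {E : Type*} [NormedAddCommGroup E] [NormedSpace ℝ E] [FiniteDimensional ℝ E]
    {F : E → ℝ} (hF : IsMinkowskiNorm F)
    (Leg : (E →L[ℝ] ℝ) → E)
    (hLeg : ∀ α : E →L[ℝ] ℝ,
      F (Leg α) = dualNorm F α ∧ α (Leg α) = (dualNorm F α) ^ 2) :
    Function.Bijective Leg ∧
    Leg (0 : E →L[ℝ] ℝ) = 0 ∧
    Continuous Leg ∧
    ContDiffOn ℝ (⊤ : ℕ∞) Leg {(0 : E →L[ℝ] ℝ)}ᶜ ∧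
    (∀ v : E, v ≠ 0 → ∀ α : E →L[ℝ] ℝ,
      (Leg α = v ↔ ∀ w : E, α w = fundamentalTensor F v v w)) := by
  rcases subsingleton_or_nontrivial E with hE | hE
  · have hallE : ∀ v : E, v = 0 := fun v => Subsingleton.elim v 0
    have hLeg' : Leg = fun _ => (0:E) := funext fun α => hallE _
    haveI : Subsingleton (E →L[ℝ] ℝ) :=
      ⟨fun a b => ContinuousLinearMap.ext fun v => by rw [hallE v]; simp⟩
    refine ⟨⟨fun a b _ => Subsingleton.elim a b,
      fun v => ⟨0, (hallE _).trans (hallE v).symm⟩⟩, hallE _, ?_, ?_, ?_⟩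
    · rw [hLeg']; exact continuous_const
    · rw [hLeg']; exact contDiffOn_const
    · intro v hv; exact absurd (hallE v) hv
  -- Nontrivial case
  set G := fderiv ℝ (fun x => F x ^ 2) with hG
  set L : E → (E →L[ℝ] ℝ) := fun v => (1/2 : ℝ) • G v with hLdef
  -- basic facts
  have hLeg0 : Leg 0 = 0 := by
    have h1 := (hLeg 0).1
    rw [hF.dualNorm_zero] at h1
    exact hF.eq_zero_iff.mp h1
  have hLegne : ∀ α : E →L[ℝ] ℝ, α ≠ 0 → Leg α ≠ 0 := by
    intro α hα h0
    have h1 := (hLeg α).1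
    rw [h0, hF.F_zero] at h1
    exact (hF.dualNorm_pos hα).ne h1
  have hLL : ∀ v : E, Leg (L v) = v := by
    intro v
    rcases eq_or_ne v 0 with rfl | hv
    · have hL0 : L 0 = 0 := by
        rw [hLdef]
        simp only [hG]
        rw [hF.fderiv_zero]
        simp
      rw [hL0, hLeg0]
    · apply hF.leg_backward hLeg hv
      intro w
      rw [hF.tensor_eq hv]
      simp only [hLdef, hG, ContinuousLinearMap.smul_apply, smul_eq_mul]
  have hinj : Function.Injective Leg := by
    intro α β h
    rcases eq_or_ne (Leg α) 0 with h0 | h0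
    · have hα : α = 0 := by
        by_contra hc; exact (hLegne α hc) h0
      have hβ : β = 0 := by
        by_contra hc; exact (hLegne β hc) (h ▸ h0)
      rw [hα, hβ]
    · ext w
      rw [hF.leg_forward hLeg h0 rfl w, hF.leg_forward hLeg h0 h.symm w]
  have hLLeg : ∀ α : E →L[ℝ] ℝ, L (Leg α) = α := fun α => hinj (hLL (Leg α))
  have hsurj : Function.Surjective Leg := fun v => ⟨L v, hLL v⟩
  -- smoothness at nonzero points
  have hsmoothAt : ∀ α : E →L[ℝ] ℝ, α ≠ 0 → ContDiffAt ℝ (⊤ : ℕ∞) Leg α := by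
    intro α₀ hα₀
    set v₀ := Leg α₀ with hv₀def
    have hv₀ : v₀ ≠ 0 := hLegne α₀ hα₀
    have hmem : {(0:E)}ᶜ ∈ 𝓝 v₀ := isOpen_compl_singleton.mem_nhds (by simpa using hv₀)
    have hcd : ContDiffAt ℝ (⊤ : ℕ∞) L v₀ := by
      have := (hF.contDiffOn_fderiv.contDiffAt hmem)
      exact this.const_smul (1/2 : ℝ)
    have hGd : DifferentiableAt ℝ G v₀ :=
      (hF.contDiffOn_fderiv.contDiffAt hmem).differentiableAt (by simp)
    set B : E →L[ℝ] (E →L[ℝ] ℝ) := (1/2 : ℝ) • fderiv ℝ G v₀ with hB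
    have hLder : HasFDerivAt L B v₀ := hGd.hasFDerivAt.const_smul (1/2 : ℝ)
    have hB0 : ∀ d : E, B d = 0 → d = 0 := by
      intro d hd
      by_contra hdne
      have h1 : (B d) d = 0 := by rw [hd]; simp
      have h2 : (B d) d = fundamentalTensor F v₀ d d := by
        rw [hB]
        simp only [ContinuousLinearMap.smul_apply, smul_eq_mul]
        rw [hG, second_deriv_eq_tensor F v₀ d]
        ring
      exact (hF.posdef v₀ hv₀ d hdne).ne' (h2 ▸ h1)
    have hBinj : Function.Injective B := by
      intro d d' hdd'
      have : B (d - d') = 0 := by rw [map_sub, hdd', sub_self]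
      have := hB0 _ this
      exact sub_eq_zero.mp this
    have hfin : Module.finrank ℝ E = Module.finrank ℝ (E →L[ℝ] ℝ) := by
      rw [← (LinearMap.toContinuousLinearMap :
        (E →ₗ[ℝ] ℝ) ≃ₗ[ℝ] (E →L[ℝ] ℝ)).finrank_eq]
      rw [Module.finrank_linearMap_self]
    have hBbij : Function.Bijective B.toLinearMap :=
      ⟨hBinj, (LinearMap.injective_iff_surjective_of_finrank_eq_finrank hfin).mp hBinj⟩
    set A : E ≃L[ℝ] (E →L[ℝ] ℝ) :=
      (LinearEquiv.ofBijective B.toLinearMap hBbij).toContinuousLinearEquiv with hA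
    have hAB : (A : E →L[ℝ] (E →L[ℝ] ℝ)) = B := by
      ext d
      rfl
    have hfd : HasFDerivAt L (A : E →L[ℝ] (E →L[ℝ] ℝ)) v₀ := by rw [hAB]; exact hLder
    have hstrict : HasStrictFDerivAt L (A : E →L[ℝ] (E →L[ℝ] ℝ)) v₀ :=
      hcd.hasStrictFDerivAt' hfd (by simp)
    have hgcd : ContDiffAt ℝ (⊤ : ℕ∞) (hcd.localInverse hfd (by simp)) (L v₀) :=
      hcd.to_localInverse hfd (by simp)
    have hkey : hcd.localInverse hfd (by simp)
        = (hcd.hasStrictFDerivAt' hfd (by simp)).localInverse L A v₀ := rfl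
    have hα₀eq : L v₀ = α₀ := hLLeg α₀
    have hionv : ∀ᶠ y in 𝓝 α₀,
        L ((hcd.hasStrictFDerivAt' hfd (by simp)).localInverse L A v₀ y) = y := by
      have := (hcd.hasStrictFDerivAt' hfd (by simp)).eventually_right_inverse
      rwa [hα₀eq] at this
    have heq : Leg =ᶠ[𝓝 α₀] hcd.localInverse hfd (by simp) := by
      rw [hkey]
      filter_upwards [hionv] with y hy
      conv_lhs => rw [← hy]
      exact hLL _
    rw [hα₀eq] at hgcd
    exact hgcd.congr_of_eventuallyEq heq
  -- continuity at 0
  obtain ⟨C, hC, hCb⟩ := hF.dualNorm_le_opNorm_aux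
  obtain ⟨m, hm, hmb⟩ := hF.exists_lower
  have hc0 : ContinuousAt Leg 0 := by
    rw [ContinuousAt, hLeg0]
    apply squeeze_zero_norm (a := fun α : (E →L[ℝ] ℝ) => (m⁻¹ * C) * ‖α‖)
    · intro α
      have h1 : m * ‖Leg α‖ ≤ F (Leg α) := hmb _
      have h2 : F (Leg α) = dualNorm F α := (hLeg α).1
      have h3 : dualNorm F α ≤ C * ‖α‖ := hCb α
      have h4 : m * ‖Leg α‖ ≤ C * ‖α‖ := by
        rw [h2] at h1; linarith
      calc ‖Leg α‖ = m⁻¹ * (m * ‖Leg α‖) := by field_simp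
        _ ≤ m⁻¹ * (C * ‖α‖) := by
            apply mul_le_mul_of_nonneg_left h4 (inv_pos.mpr hm).le
        _ = m⁻¹ * C * ‖α‖ := by ring
    · have : Tendsto (fun α : (E →L[ℝ] ℝ) => ‖α‖) (𝓝 0) (𝓝 0) := by
        simpa using (continuous_norm (E := (E →L[ℝ] ℝ))).tendsto 0
      simpa using this.const_mul (m⁻¹ * C)
  refine ⟨⟨hinj, hsurj⟩, hLeg0, ?_, ?_, ?_⟩
  · rw [continuous_iff_continuousAt]
    intro α
    rcases eq_or_ne α 0 with rfl | hα
    · exact hc0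
    · exact (hsmoothAt α hα).continuousAt
  · intro α hα
    exact (hsmoothAt α (by simpa using hα)).contDiffWithinAt
  · intro v hv α
    exact ⟨fun h => hF.leg_forward hLeg hv h, fun h => hF.leg_backward hLeg hv h⟩
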